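/- Let 𝔫 be a finite-dimensional real nilpotent Lie algebra and L : 𝔫 → 𝔫 a hyperbolic Lie algebra automorphism admitting a real eigenbasis and having sorted spectrum. Then for every i ≥ 1 the i-th term of the lower central series splits as 𝔫^i = (𝔫^s)^i ⊕ (𝔫^u)^i, where (𝔫^s)^i and (𝔫^u)^i denote the i-th terms of the lower central series of the subalgebras 𝔫^s and 𝔫^u. Consequently, for every i, the graded pieces satisfy 𝔫^u_(i) = 𝔫_(i) ∩ 𝔫^u and 𝔫^s_(i) = 𝔫_(i) ∩ 𝔫^s, where 𝔫^u_(i) (resp. 𝔫^s_(i)) is the grading of 𝔫^u (resp. 𝔫^s) induced by the restriction of L. -/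

import Mathlib

/-!
A bracket of eigenvectors of `L` is an eigenvector for the product of the eigenvalues, so `𝔫^s`
and `𝔫^u` are complementary subalgebras. The sorted spectrum makes them commute: if `v` is
stable, `w` unstable and `⁅v, w⁆ ≠ 0`, then `⁅v, w⁆` lies strictly deeper in the lower central
series than both `v` and `w`. If `⁅v, w⁆` is unstable, its eigenvalue `cv * cw` must exceed `cw`
in modulus; if it is stable, the same argument for `L⁻¹` makes `(cv * cw)⁻¹` exceed `cv⁻¹`.
Both contradict `|cv| < 1 < |cw|`. For commuting subalgebras the lower central series of the
sum is the sum of the lower central series, and by modularity intersecting with `𝔫^u` (resp.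
`𝔫^s`) recovers one summand; the same modularity argument identifies the gradings.
-/

/-- The span of all brackets `⁅x, y⁆` with `x ∈ A`, `y ∈ B`. -/
def bracketSpan {𝔫 : Type*} [LieRing 𝔫] [LieAlgebra ℝ 𝔫] (A B : Submodule ℝ 𝔫) :
    Submodule ℝ 𝔫 :=
  Submodule.span ℝ {z : 𝔫 | ∃ x ∈ A, ∃ y ∈ B, z = ⁅x, y⁆}

/-- The lower central series of a subalgebra `A` (as a submodule of `𝔫`), 0-indexed:
`lcsOf A i` is the paper's `A^{i+1}`, so `lcsOf A 0 = A = A¹` and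
`A^{i+1} = ⁅A, A^i⁆`. -/
def lcsOf {𝔫 : Type*} [LieRing 𝔫] [LieAlgebra ℝ 𝔫] (A : Submodule ℝ 𝔫) :
    ℕ → Submodule ℝ 𝔫
  | 0 => A
  | (i + 1) => bracketSpan A (lcsOf A i)

/-- `v` is an eigenvector of `L` (with some real eigenvalue). -/
def IsEigvec {𝔫 : Type*} [LieRing 𝔫] [LieAlgebra ℝ 𝔫] (L : 𝔫 ≃ₗ⁅ℝ⁆ 𝔫) (v : 𝔫) : Prop :=
  v ≠ 0 ∧ ∃ c : ℝ, L v = c • v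

/-- The `L`-grading of the subalgebra `A ⊆ 𝔫`: for `i ≥ 1` the `i`-th piece is the span of the
eigenvectors of `L` lying in `A^i` but not in `A^{i+1}`; the (unused) `0`-th piece is `⊥`.
The paper's `𝔫_(i)` is `grading L ⊤ i`. -/
def grading {𝔫 : Type*} [LieRing 𝔫] [LieAlgebra ℝ 𝔫] (L : 𝔫 ≃ₗ⁅ℝ⁆ 𝔫) (A : Submodule ℝ 𝔫) :
    ℕ → Submodule ℝ 𝔫
  | 0 => ⊥
  | (i + 1) => Submodule.span ℝ
      {v : 𝔫 | IsEigvec L v ∧ v ∈ lcsOf A i ∧ v ∉ lcsOf A (i + 1)}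

/-- `L` admits a basis of real eigenvectors. -/
def HasRealEigenbasis {𝔫 : Type*} [LieRing 𝔫] [LieAlgebra ℝ 𝔫] (L : 𝔫 ≃ₗ⁅ℝ⁆ 𝔫) : Prop :=
  ∃ (n : ℕ) (b : Module.Basis (Fin n) ℝ 𝔫) (c : Fin n → ℝ), ∀ i, L (b i) = c i • b i


/-- The unstable subspace `𝔫^u`: the span of the eigenvectors of `L` whose eigenvalue has
modulus `> 1`. -/
def unstable {𝔫 : Type*} [LieRing 𝔫] [LieAlgebra ℝ 𝔫] (L : 𝔫 ≃ₗ⁅ℝ⁆ 𝔫) : Submodule ℝ 𝔫 :=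
  Submodule.span ℝ {v : 𝔫 | v ≠ 0 ∧ ∃ c : ℝ, L v = c • v ∧ 1 < |c|}

/-- The stable subspace `𝔫^s`: the span of the eigenvectors of `L` whose eigenvalue has
modulus `< 1`. -/
def stable {𝔫 : Type*} [LieRing 𝔫] [LieAlgebra ℝ 𝔫] (L : 𝔫 ≃ₗ⁅ℝ⁆ 𝔫) : Submodule ℝ 𝔫 :=
  Submodule.span ℝ {v : 𝔫 | v ≠ 0 ∧ ∃ c : ℝ, L v = c • v ∧ |c| < 1}

/-- `L` is hyperbolic: no eigenvalue has modulus `1`. -/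
def IsHyperbolic {𝔫 : Type*} [LieRing 𝔫] [LieAlgebra ℝ 𝔫] (L : 𝔫 ≃ₗ⁅ℝ⁆ 𝔫) : Prop :=
  ∀ (v : 𝔫) (c : ℝ), v ≠ 0 → L v = c • v → |c| ≠ 1

/-- `L` has sorted unstable spectrum: if `k < j` and `v ∈ 𝔫_(k)`, `w ∈ 𝔫_(j)` are unstable
eigenvectors with eigenvalues `cv`, `cw`, then `|cv| < |cw|`. -/
def SortedUnstableSpectrum {𝔫 : Type*} [LieRing 𝔫] [LieAlgebra ℝ 𝔫] (L : 𝔫 ≃ₗ⁅ℝ⁆ 𝔫) : Prop :=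
  ∀ (k j : ℕ), k < j → ∀ (v w : 𝔫) (cv cw : ℝ),
    v ≠ 0 → L v = cv • v → 1 < |cv| → v ∈ grading L ⊤ k →
    w ≠ 0 → L w = cw • w → 1 < |cw| → w ∈ grading L ⊤ j →
    |cv| < |cw|

/-- `L` has sorted spectrum: `L` has sorted unstable spectrum and `L⁻¹` has sorted unstable
spectrum. -/
def SortedSpectrum {𝔫 : Type*} [LieRing 𝔫] [LieAlgebra ℝ 𝔫] (L : 𝔫 ≃ₗ⁅ℝ⁆ 𝔫) : Prop :=
  SortedUnstableSpectrum L ∧ SortedUnstableSpectrum L.symm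

theorem sup_inf_eq_right_of_disjoint {α : Type*} [Lattice α] [OrderBot α] [IsModularLattice α]
    {a b x y : α} (hx : x ≤ a) (hy : y ≤ b) (hab : Disjoint a b) : (x ⊔ y) ⊓ b = y := by
  rw [sup_comm, sup_inf_assoc_of_le x hy, (hab.mono_left hx).eq_bot, sup_bot_eq]

theorem Submodule.span_inter_eq_inf_of_subset_union {R M : Type*} [Ring R] [AddCommGroup M]
    [Module R M] {A B : Submodule R M} {S : Set M} (hS : S ⊆ A ∪ B) (hAB : Disjoint A B) :
    span R (S ∩ B) = span R S ⊓ B := by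
  refine le_antisymm
    (le_inf (span_mono Set.inter_subset_left) (span_le.2 Set.inter_subset_right)) ?_
  have hsplit : span R S = span R (S ∩ A) ⊔ span R (S ∩ B) := by
    rw [← span_union, ← Set.inter_union_distrib_left, Set.inter_eq_left.2 hS]
  rw [hsplit, sup_inf_eq_right_of_disjoint (span_le.2 Set.inter_subset_right)
    (span_le.2 Set.inter_subset_right) hAB]

section LowerCentralSeries

variable {𝔫 : Type*} [LieRing 𝔫] [LieAlgebra ℝ 𝔫]

theorem bracketSpan_le {A B C : Submodule ℝ 𝔫} (h : ∀ x ∈ A, ∀ y ∈ B, ⁅x, y⁆ ∈ C) :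
    bracketSpan A B ≤ C :=
  Submodule.span_le.2 fun _ ⟨x, hx, y, hy, hz⟩ => hz ▸ h x hx y hy

theorem lie_mem_bracketSpan {A B : Submodule ℝ 𝔫} {x y : 𝔫} (hx : x ∈ A) (hy : y ∈ B) :
    ⁅x, y⁆ ∈ bracketSpan A B :=
  Submodule.subset_span ⟨x, hx, y, hy, rfl⟩

theorem bracketSpan_mono {A A' B B' : Submodule ℝ 𝔫} (hA : A ≤ A') (hB : B ≤ B') :
    bracketSpan A B ≤ bracketSpan A' B' :=
  bracketSpan_le fun _ hx _ hy => lie_mem_bracketSpan (hA hx) (hB hy)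

theorem lie_mem_of_mem_span {s t : Set 𝔫} {C : Submodule ℝ 𝔫}
    (h : ∀ x ∈ s, ∀ y ∈ t, ⁅x, y⁆ ∈ C) :
    ∀ x ∈ Submodule.span ℝ s, ∀ y ∈ Submodule.span ℝ t, ⁅x, y⁆ ∈ C := by
  let bracket : 𝔫 →ₗ[ℝ] 𝔫 →ₗ[ℝ] 𝔫 := LinearMap.mk₂ ℝ (⁅·, ·⁆) add_lie smul_lie lie_add lie_smul
  have hle : Submodule.map₂ bracket (Submodule.span ℝ s) (Submodule.span ℝ t) ≤ C := by
    rw [Submodule.map₂_span_span, Submodule.span_le]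
    rintro _ ⟨x, hx, y, hy, rfl⟩
    exact h x hx y hy
  exact fun x hx y hy => hle (Submodule.apply_mem_map₂ bracket hx hy)

theorem lie_eq_zero_comm {A B : Submodule ℝ 𝔫} (h : ∀ x ∈ A, ∀ y ∈ B, ⁅x, y⁆ = 0) :
    ∀ y ∈ B, ∀ x ∈ A, ⁅y, x⁆ = 0 := fun y hy x hx => by
  rw [← lie_skew, h x hx y hy, neg_zero]

theorem lcsOf_mono {A B : Submodule ℝ 𝔫} (h : A ≤ B) : ∀ i, lcsOf A i ≤ lcsOf B i
  | 0 => h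
  | i + 1 => bracketSpan_mono h (lcsOf_mono h i)

theorem lcsOf_le_self {A : Submodule ℝ 𝔫} (hA : ∀ x ∈ A, ∀ y ∈ A, ⁅x, y⁆ ∈ A) :
    ∀ i, lcsOf A i ≤ A
  | 0 => le_rfl
  | i + 1 => bracketSpan_le fun x hx _ hy => hA x hx _ (lcsOf_le_self hA i hy)

theorem lcsOf_top_antitone : Antitone (lcsOf (⊤ : Submodule ℝ 𝔫)) := by
  refine antitone_nat_of_succ_le fun i => ?_
  induction i with
  | zero => exact le_top
  | succ i ih => exact bracketSpan_mono le_rfl ih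

theorem lcsOf_top_le_lowerCentralSeries :
    ∀ i, lcsOf (⊤ : Submodule ℝ 𝔫) i ≤ (LieModule.lowerCentralSeries ℝ 𝔫 𝔫 i).toSubmodule
  | 0 => le_top
  | i + 1 => bracketSpan_le fun x _ _ hy => by
      rw [LieModule.lowerCentralSeries_succ]
      exact LieSubmodule.lie_mem_lie (LieSubmodule.mem_top x)
        (lcsOf_top_le_lowerCentralSeries i hy)

theorem exists_mem_lcsOf_top_not_mem_succ [LieRing.IsNilpotent 𝔫] {v : 𝔫} (hv : v ≠ 0) :
    ∃ j, v ∈ lcsOf (⊤ : Submodule ℝ 𝔫) j ∧ v ∉ lcsOf (⊤ : Submodule ℝ 𝔫) (j + 1) := by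
  obtain ⟨k, hk⟩ := LieModule.IsNilpotent.nilpotent ℝ 𝔫 𝔫
  by_contra! h
  have hmem : ∀ j, v ∈ lcsOf (⊤ : Submodule ℝ 𝔫) j := fun j => by
    induction j with
    | zero => exact Submodule.mem_top
    | succ j ih => exact h j ih
  have := lcsOf_top_le_lowerCentralSeries k (hmem k)
  rw [hk] at this
  exact hv this

theorem lcsOf_sup_of_lie_eq_zero {A B : Submodule ℝ 𝔫} (hA : ∀ x ∈ A, ∀ y ∈ A, ⁅x, y⁆ ∈ A)
    (hB : ∀ x ∈ B, ∀ y ∈ B, ⁅x, y⁆ ∈ B) (hAB : ∀ x ∈ A, ∀ y ∈ B, ⁅x, y⁆ = 0) :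
    ∀ i, lcsOf (A ⊔ B) i = lcsOf A i ⊔ lcsOf B i
  | 0 => rfl
  | i + 1 => by
    refine le_antisymm ?_ (sup_le (lcsOf_mono le_sup_left _) (lcsOf_mono le_sup_right _))
    rw [lcsOf, lcsOf_sup_of_lie_eq_zero hA hB hAB i]
    refine bracketSpan_le fun x hx y hy => ?_
    obtain ⟨a, ha, b, hb, rfl⟩ := Submodule.mem_sup.1 hx
    obtain ⟨a', ha', b', hb', rfl⟩ := Submodule.mem_sup.1 hy
    rw [add_lie, lie_add, lie_add, hAB a ha b' (lcsOf_le_self hB i hb'),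
      lie_eq_zero_comm hAB b hb a' (lcsOf_le_self hA i ha'), add_zero, zero_add]
    exact add_mem (Submodule.mem_sup_left (lie_mem_bracketSpan ha ha'))
      (Submodule.mem_sup_right (lie_mem_bracketSpan hb hb'))

theorem lcsOf_eq_lcsOf_top_inf {A B : Submodule ℝ 𝔫} (hA : ∀ x ∈ A, ∀ y ∈ A, ⁅x, y⁆ ∈ A)
    (hB : ∀ x ∈ B, ∀ y ∈ B, ⁅x, y⁆ ∈ B) (hAB : ∀ x ∈ A, ∀ y ∈ B, ⁅x, y⁆ = 0)
    (hdisj : Disjoint A B) (htop : A ⊔ B = ⊤) (i : ℕ) :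
    lcsOf B i = lcsOf ⊤ i ⊓ B := by
  rw [← htop, lcsOf_sup_of_lie_eq_zero hA hB hAB,
    sup_inf_eq_right_of_disjoint (lcsOf_le_self hA i) (lcsOf_le_self hB i) hdisj]

theorem grading_eq_grading_top_inf (L : 𝔫 ≃ₗ⁅ℝ⁆ 𝔫) {A B : Submodule ℝ 𝔫}
    (hcover : ∀ v, IsEigvec L v → v ∈ A ∨ v ∈ B) (hdisj : Disjoint A B)
    (hlcs : ∀ i, lcsOf B i = lcsOf ⊤ i ⊓ B) : ∀ i, grading L B i = grading L ⊤ i ⊓ B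
  | 0 => (bot_inf_eq _).symm
  | i + 1 => by
    rw [grading, grading, ← Submodule.span_inter_eq_inf_of_subset_union
      (fun v hv => hcover v hv.1) hdisj]
    congr 1
    ext v
    simp only [Set.mem_ofPred_eq, Set.mem_inter_iff, SetLike.mem_coe, hlcs, Submodule.mem_inf]
    tauto

end LowerCentralSeries

section Eigenvectors

variable {𝔫 : Type*} [LieRing 𝔫] [LieAlgebra ℝ 𝔫] (L : 𝔫 ≃ₗ⁅ℝ⁆ 𝔫)

theorem LieEquiv.eigenvalue_ne_zero {v : 𝔫} {c : ℝ} (hv0 : v ≠ 0) (hv : L v = c • v) :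
    c ≠ 0 := by
  rintro rfl
  rw [zero_smul, map_eq_zero_iff L L.injective] at hv
  exact hv0 hv

theorem LieEquiv.symm_apply_eq_inv_smul {v : 𝔫} {c : ℝ} (hv0 : v ≠ 0) (hv : L v = c • v) :
    L.symm v = c⁻¹ • v := by
  rw [LieEquiv.symm_apply_eq, map_smul, hv, smul_smul,
    inv_mul_cancel₀ (L.eigenvalue_ne_zero hv0 hv), one_smul]

theorem LieEquiv.map_lie_of_eigen {v w : 𝔫} {cv cw : ℝ} (hv : L v = cv • v)
    (hw : L w = cw • w) : L ⁅v, w⁆ = (cv * cw) • ⁅v, w⁆ := by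
  rw [LieEquiv.map_lie, hv, hw, smul_lie, lie_smul, smul_smul]

theorem lie_mem_span_eigenvectors {p : ℝ → Prop} (hp : ∀ a b, p a → p b → p (a * b)) :
    ∀ x ∈ Submodule.span ℝ {v : 𝔫 | v ≠ 0 ∧ ∃ c, L v = c • v ∧ p c},
    ∀ y ∈ Submodule.span ℝ {v : 𝔫 | v ≠ 0 ∧ ∃ c, L v = c • v ∧ p c},
    ⁅x, y⁆ ∈ Submodule.span ℝ {v : 𝔫 | v ≠ 0 ∧ ∃ c, L v = c • v ∧ p c} := by
  refine lie_mem_of_mem_span ?_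
  rintro x ⟨-, cx, hx, hpx⟩ y ⟨-, cy, hy, hpy⟩
  by_cases hz : ⁅x, y⁆ = 0
  · rw [hz]
    exact zero_mem _
  · exact Submodule.subset_span ⟨hz, cx * cy, L.map_lie_of_eigen hx hy, hp cx cy hpx hpy⟩

theorem disjoint_span_eigenvectors {p q : ℝ → Prop} (hpq : ∀ c, p c → ¬q c) :
    Disjoint (Submodule.span ℝ {v : 𝔫 | v ≠ 0 ∧ ∃ c, L v = c • v ∧ p c})
      (Submodule.span ℝ {v : 𝔫 | v ≠ 0 ∧ ∃ c, L v = c • v ∧ q c}) := by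
  let f : Module.End ℝ 𝔫 := L.toLinearEquiv
  have hle : ∀ r : ℝ → Prop, Submodule.span ℝ {v : 𝔫 | v ≠ 0 ∧ ∃ c, L v = c • v ∧ r c} ≤
      ⨆ c ∈ {c | r c}, f.eigenspace c := by
    intro r
    refine Submodule.span_le.2 ?_
    rintro v ⟨-, c, hv, hrc⟩
    exact (le_biSup f.eigenspace hrc) (Module.End.mem_eigenspace_iff.2 hv)
  exact ((Module.End.eigenspaces_iSupIndep f).disjoint_biSup_biSup
    (Set.disjoint_left.2 hpq)).mono (hle p) (hle q)

theorem stable_lie_mem : ∀ x ∈ stable L, ∀ y ∈ stable L, ⁅x, y⁆ ∈ stable L :=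
  lie_mem_span_eigenvectors L fun a b ha hb => by
    rw [abs_mul]
    exact mul_lt_one_of_nonneg_of_lt_one_left (abs_nonneg a) ha hb.le

theorem unstable_lie_mem : ∀ x ∈ unstable L, ∀ y ∈ unstable L, ⁅x, y⁆ ∈ unstable L :=
  lie_mem_span_eigenvectors L fun a b ha hb => by
    rw [abs_mul]
    exact one_lt_mul_of_lt_of_le ha hb.le

theorem disjoint_stable_unstable : Disjoint (stable L) (unstable L) :=
  disjoint_span_eigenvectors L fun _ h h' => lt_asymm h h'

theorem IsEigvec.mem_stable_or_mem_unstable (hhyp : IsHyperbolic L) {v : 𝔫}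
    (hv : IsEigvec L v) : v ∈ stable L ∨ v ∈ unstable L := by
  obtain ⟨hv0, c, hc⟩ := hv
  exact (hhyp v c hv0 hc).lt_or_gt.imp (fun h => Submodule.subset_span ⟨hv0, c, hc, h⟩)
    (fun h => Submodule.subset_span ⟨hv0, c, hc, h⟩)

theorem stable_sup_unstable (hL : HasRealEigenbasis L) (hhyp : IsHyperbolic L) :
    stable L ⊔ unstable L = ⊤ := by
  obtain ⟨n, b, c, hbc⟩ := hL
  rw [eq_top_iff, ← b.span_eq, Submodule.span_le]
  rintro _ ⟨i, rfl⟩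
  exact (IsEigvec.mem_stable_or_mem_unstable L hhyp ⟨b.ne_zero i, c i, hbc i⟩).elim
    Submodule.mem_sup_left Submodule.mem_sup_right

end Eigenvectors

section SortedSpectrum

variable {𝔫 : Type*} [LieRing 𝔫] [LieAlgebra ℝ 𝔫] [LieRing.IsNilpotent 𝔫] {L : 𝔫 ≃ₗ⁅ℝ⁆ 𝔫}

theorem SortedUnstableSpectrum.abs_lt_of_lie (hsort : SortedUnstableSpectrum L) {v w : 𝔫}
    {cw c : ℝ} (hw0 : w ≠ 0) (hw : L w = cw • w) (hcw : 1 < |cw|) (hz0 : ⁅v, w⁆ ≠ 0)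
    (hz : L ⁅v, w⁆ = c • ⁅v, w⁆) (hc : 1 < |c|) : |cw| < |c| := by
  obtain ⟨j, hwj, hwj'⟩ := exists_mem_lcsOf_top_not_mem_succ hw0
  obtain ⟨k, hzk, hzk'⟩ := exists_mem_lcsOf_top_not_mem_succ hz0
  have hjk : j < k := by
    by_contra! hkj
    exact hzk' (lcsOf_top_antitone (Nat.succ_le_succ hkj)
      (lie_mem_bracketSpan Submodule.mem_top hwj))
  exact hsort (j + 1) (k + 1) (Nat.succ_lt_succ hjk) w ⁅v, w⁆ cw c hw0 hw hcw
    (Submodule.subset_span ⟨⟨hw0, cw, hw⟩, hwj, hwj'⟩) hz0 hz hc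
    (Submodule.subset_span ⟨⟨hz0, c, hz⟩, hzk, hzk'⟩)

theorem lie_eq_zero_of_eigen_stable_of_eigen_unstable (hhyp : IsHyperbolic L)
    (hsort : SortedSpectrum L) {v w : 𝔫} {cv cw : ℝ} (hv0 : v ≠ 0) (hv : L v = cv • v)
    (hcv : |cv| < 1) (hw0 : w ≠ 0) (hw : L w = cw • w) (hcw : 1 < |cw|) : ⁅v, w⁆ = 0 := by
  by_contra hz0
  have hcv0 : 0 < |cv| := abs_pos.2 (L.eigenvalue_ne_zero hv0 hv)
  rcases (hhyp _ _ hz0 (L.map_lie_of_eigen hv hw)).lt_or_gt with hlt | hgt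
  · -- `⁅v, w⁆` is stable: run the argument for `L⁻¹`, with `v` in the role of `w`
    have hz0' : ⁅w, v⁆ ≠ 0 := by rwa [← lie_skew, neg_ne_zero]
    have hz' := L.symm_apply_eq_inv_smul hz0' (L.map_lie_of_eigen hw hv)
    have hprod : 0 < |cw * cv| :=
      abs_pos.2 (L.eigenvalue_ne_zero hz0' (L.map_lie_of_eigen hw hv))
    have := hsort.2.abs_lt_of_lie hv0 (L.symm_apply_eq_inv_smul hv0 hv)
      (by rwa [abs_inv, one_lt_inv₀ hcv0]) hz0' hz'
      (by rwa [abs_inv, one_lt_inv₀ hprod, mul_comm])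
    rw [abs_inv, abs_inv, inv_lt_inv₀ hcv0 hprod, abs_mul] at this
    nlinarith
  · have := hsort.1.abs_lt_of_lie hw0 hw hcw hz0 (L.map_lie_of_eigen hv hw) hgt
    rw [abs_mul] at this
    nlinarith

theorem lie_eq_zero_of_mem_stable_of_mem_unstable (hhyp : IsHyperbolic L)
    (hsort : SortedSpectrum L) : ∀ x ∈ stable L, ∀ y ∈ unstable L, ⁅x, y⁆ = 0 := by
  have hbot : ∀ x ∈ stable L, ∀ y ∈ unstable L, ⁅x, y⁆ ∈ (⊥ : Submodule ℝ 𝔫) := by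
    refine lie_mem_of_mem_span ?_
    rintro v ⟨hv0, cv, hv, hcv⟩ w ⟨hw0, cw, hw, hcw⟩
    exact lie_eq_zero_of_eigen_stable_of_eigen_unstable hhyp hsort hv0 hv hcv hw0 hw hcw
  exact fun x hx y hy => (Submodule.mem_bot ℝ).1 (hbot x hx y hy)

end SortedSpectrum

theorem lowerCentralSeries_splits_of_sorted_general
    {𝔫 : Type*} [LieRing 𝔫] [LieAlgebra ℝ 𝔫]
    [LieRing.IsNilpotent 𝔫]
    (L : 𝔫 ≃ₗ⁅ℝ⁆ 𝔫) (hL : HasRealEigenbasis L)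
    (hhyp : IsHyperbolic L) (hsort : SortedSpectrum L) :
    (∀ i : ℕ, 1 ≤ i →
      lcsOf (⊤ : Submodule ℝ 𝔫) (i - 1) = lcsOf (stable L) (i - 1) ⊔ lcsOf (unstable L) (i - 1)
        ∧ Disjoint (lcsOf (stable L) (i - 1)) (lcsOf (unstable L) (i - 1))) ∧
    (∀ i : ℕ, grading L (unstable L) i = grading L ⊤ i ⊓ unstable L) ∧
    (∀ i : ℕ, grading L (stable L) i = grading L ⊤ i ⊓ stable L) := by
  have hdisj := disjoint_stable_unstable L
  have htop := stable_sup_unstable L hL hhyp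
  have hcomm := lie_eq_zero_of_mem_stable_of_mem_unstable hhyp hsort
  have hcover : ∀ v, IsEigvec L v → v ∈ stable L ∨ v ∈ unstable L :=
    fun _ hv => hv.mem_stable_or_mem_unstable L hhyp
  refine ⟨fun i _ => ⟨?_, ?_⟩, grading_eq_grading_top_inf L hcover hdisj ?_,
    grading_eq_grading_top_inf L (fun v hv => (hcover v hv).symm) hdisj.symm ?_⟩
  · rw [← htop, lcsOf_sup_of_lie_eq_zero (stable_lie_mem L) (unstable_lie_mem L) hcomm]
  · exact hdisj.mono (lcsOf_le_self (stable_lie_mem L) _) (lcsOf_le_self (unstable_lie_mem L) _)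
  · exact lcsOf_eq_lcsOf_top_inf (stable_lie_mem L) (unstable_lie_mem L) hcomm hdisj htop
  · exact lcsOf_eq_lcsOf_top_inf (unstable_lie_mem L) (stable_lie_mem L)
      (lie_eq_zero_comm hcomm) hdisj.symm (sup_comm (stable L) _ ▸ htop)

/-- for a hyperbolic automorphism with real eigenbasis and sorted spectrum, the
lower central series splits, `𝔫^i = (𝔫^s)^i ⊕ (𝔫^u)^i` for every `i ≥ 1`, and the graded
pieces satisfy `𝔫^u_(i) = 𝔫_(i) ∩ 𝔫^u` and `𝔫^s_(i) = 𝔫_(i) ∩ 𝔫^s`.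
(Recall `lcsOf A (i-1)` is the paper's `A^i` and `grading L A i` is the grading of `A` induced
by the restriction of `L`.) -/
theorem lowerCentralSeries_splits_of_sorted
    {𝔫 : Type*} [LieRing 𝔫] [LieAlgebra ℝ 𝔫] [FiniteDimensional ℝ 𝔫]
    [LieRing.IsNilpotent 𝔫]
    (L : 𝔫 ≃ₗ⁅ℝ⁆ 𝔫) (hL : HasRealEigenbasis L)
    (hhyp : IsHyperbolic L) (hsort : SortedSpectrum L) :
    (∀ i : ℕ, 1 ≤ i →
      lcsOf (⊤ : Submodule ℝ 𝔫) (i - 1) = lcsOf (stable L) (i - 1) ⊔ lcsOf (unstable L) (i - 1)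
        ∧ Disjoint (lcsOf (stable L) (i - 1)) (lcsOf (unstable L) (i - 1))) ∧
    (∀ i : ℕ, grading L (unstable L) i = grading L ⊤ i ⊓ unstable L) ∧
    (∀ i : ℕ, grading L (stable L) i = grading L ⊤ i ⊓ stable L) :=
  lowerCentralSeries_splits_of_sorted_general L hL hhyp hsort
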